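/- Let (p*, ε*) be any minimizer of Problem 3. If client j satisfies p*ⱼ = 1/N and client k satisfies 0 < p*ₖ < 1/N, then vⱼ ≤ vₖ; that is, any unbiasedly selected client has a virtual cost no larger than that of the under-selected client. -/

import Mathlib

open Finset MeasureTheory Real

/-- Differential-privacy error term: sum over clients with nonzero selection
probability of `pₖ² / εₖ²`. -/
noncomputable def dpError {N : ℕ} (p ε : Fin N → ℝ) : ℝ :=
  ∑ k, if p k ≠ 0 then (p k) ^ 2 / (ε k) ^ 2 else 0

/-- Objective of Problem 3:
`G(p,ε) = η(‖p−pᵘ‖₁ + √(‖p−pᵘ‖₁² + Q·Σ_{pₖ≠0} pₖ²/εₖ²)) + Σₖ εₖ vₖ`,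
where `pᵘ = (1/N,…,1/N)`. -/
noncomputable def objG {N : ℕ} (η Q : ℝ) (v p ε : Fin N → ℝ) : ℝ :=
  η * ((∑ k, |p k - 1 / (N : ℝ)|) +
      Real.sqrt ((∑ k, |p k - 1 / (N : ℝ)|) ^ 2 + Q * dpError p ε)) +
    ∑ k, ε k * v k

/-- Feasible set of Problem 3: `Σₖ pₖ = 1`, `pₖ ≥ 0`, `εₖ ≥ 0`, and `εₖ > 0`
whenever `pₖ > 0`. -/
def Feasible {N : ℕ} (p ε : Fin N → ℝ) : Prop :=
  (∑ k, p k = 1) ∧ (∀ k, 0 ≤ p k) ∧ (∀ k, 0 ≤ ε k) ∧ (∀ k, 0 < p k → 0 < ε k)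

/-- `(p, ε)` is a minimizer of Problem 3 with virtual costs `v`. -/
def IsMinimizer {N : ℕ} (η Q : ℝ) (v p ε : Fin N → ℝ) : Prop :=
  Feasible p ε ∧ ∀ q e : Fin N → ℝ, Feasible q e → objG η Q v p ε ≤ objG η Q v q e

/-!
Two perturbations of a minimizer `(p, ε)` give the result. Swapping the data of clients `j` and `k`
leaves every term of the objective but `Σ εᵢ vᵢ` unchanged, so `(εⱼ - εₖ)(vₖ - vⱼ) ≥ 0`.
Moving a small mass `δ` from `j` to `k` keeps `‖p - pᵘ‖₁` fixed as long as both stay at most `1/N`,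
so the privacy error cannot decrease; to first order in `δ` this says `pⱼ/εⱼ² ≤ pₖ/εₖ²`, which
forces `εₖ < εⱼ` when `pₖ < pⱼ`. Hence `vⱼ ≤ vₖ`.
-/

open Filter Topology

lemma nonneg_of_forall_mem_Ioc_nonneg_add_mul {c d r : ℝ} (hr : 0 < r)
    (h : ∀ δ ∈ Set.Ioc 0 r, 0 ≤ c + δ * d) : 0 ≤ c := by
  have hlim : Tendsto (fun δ => c + δ * d) (𝓝[>] 0) (𝓝 c) := by
    have : Continuous fun δ : ℝ => c + δ * d := by fun_prop
    simpa using (this.tendsto 0).mono_left nhdsWithin_le_nhds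
  exact ge_of_tendsto hlim (eventually_of_mem (Ioc_mem_nhdsGT hr) h)

variable {N : ℕ}

lemma dpError_eq (p ε : Fin N → ℝ) : dpError p ε = ∑ k, p k ^ 2 / ε k ^ 2 := by
  refine Finset.sum_congr rfl fun k _ => ?_
  split_ifs with h
  · rfl
  · simp [not_not.mp h]

lemma dpError_nonneg (p ε : Fin N → ℝ) : 0 ≤ dpError p ε := by
  rw [dpError_eq]
  positivity

lemma objG_sub_objG (η Q : ℝ) (v w p ε : Fin N → ℝ) :
    objG η Q w p ε - objG η Q v p ε = ∑ k, ε k * (w k - v k) := by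
  simp only [objG, mul_sub, Finset.sum_sub_distrib]
  ring

lemma objG_comp_perm (η Q : ℝ) (v p ε : Fin N → ℝ) (σ : Equiv.Perm (Fin N)) :
    objG η Q v (p ∘ σ) (ε ∘ σ) = objG η Q (v ∘ σ.symm) p ε := by
  simp only [objG, dpError_eq, Function.comp_apply]
  rw [Equiv.sum_comp σ (fun k => |p k - 1 / (N : ℝ)|),
    Equiv.sum_comp σ (fun k => p k ^ 2 / ε k ^ 2), ← Equiv.sum_comp σ (fun k => ε k * v (σ.symm k))]
  simp

lemma Feasible.comp_perm {p ε : Fin N → ℝ} (h : Feasible p ε) (σ : Equiv.Perm (Fin N)) :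
    Feasible (p ∘ σ) (ε ∘ σ) := by
  obtain ⟨hsum, hp, hε, hpε⟩ := h
  exact ⟨by simpa [Equiv.sum_comp σ p] using hsum, fun k => hp _, fun k => hε _, fun k => hpε _⟩

def transfer (p : Fin N → ℝ) (j k : Fin N) (δ : ℝ) : Fin N → ℝ :=
  p - Pi.single j δ + Pi.single k δ

section Transfer

variable {p : Fin N → ℝ} {j k : Fin N} {δ : ℝ}

lemma transfer_apply_left (hjk : j ≠ k) : transfer p j k δ j = p j - δ := by
  simp [transfer, hjk]

lemma transfer_apply_right (hjk : j ≠ k) : transfer p j k δ k = p k + δ := by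
  simp [transfer, hjk.symm]

lemma transfer_apply_of_ne {i : Fin N} (hij : i ≠ j) (hik : i ≠ k) : transfer p j k δ i = p i := by
  simp [transfer, hij, hik]

lemma sum_transfer : ∑ i, transfer p j k δ i = ∑ i, p i := by
  simp [transfer, Finset.sum_add_distrib, Finset.sum_sub_distrib]

lemma sum_comp_transfer_sub (hjk : j ≠ k) (f : Fin N → ℝ → ℝ) :
    ∑ i, f i (transfer p j k δ i) - ∑ i, f i (p i) =
      (f j (p j - δ) - f j (p j)) + (f k (p k + δ) - f k (p k)) := by
  rw [← Finset.sum_sub_distrib, Fintype.sum_eq_add j k hjk, transfer_apply_left hjk,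
    transfer_apply_right hjk]
  rintro i ⟨hij, hik⟩
  rw [transfer_apply_of_ne hij hik, sub_self]

lemma sum_abs_transfer_sub_eq {c : ℝ} (hjk : j ≠ k) (hδ : 0 ≤ δ) (hj : p j ≤ c) (hk : p k + δ ≤ c) :
    ∑ i, |transfer p j k δ i - c| = ∑ i, |p i - c| := by
  rw [← sub_eq_zero, sum_comp_transfer_sub hjk (fun _ x => |x - c|), abs_of_nonpos (by linarith),
    abs_of_nonpos (by linarith), abs_of_nonpos (by linarith), abs_of_nonpos (by linarith)]
  ring

lemma dpError_transfer_sub (hjk : j ≠ k) (ε : Fin N → ℝ) :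
    dpError (transfer p j k δ) ε - dpError p ε =
      δ * (2 * (p k / ε k ^ 2 - p j / ε j ^ 2) + δ * (1 / ε j ^ 2 + 1 / ε k ^ 2)) := by
  rw [dpError_eq, dpError_eq, sum_comp_transfer_sub hjk (fun i x => x ^ 2 / ε i ^ 2)]
  ring

lemma Feasible.transfer {ε : Fin N → ℝ} (h : Feasible p ε) (hjk : j ≠ k) (hδ : 0 ≤ δ)
    (hδj : δ ≤ p j) (hεk : 0 < ε k) : Feasible (transfer p j k δ) ε := by
  obtain ⟨hsum, hp, hε, hpε⟩ := h
  refine ⟨sum_transfer.trans hsum, fun i => ?_, hε, fun i hi => ?_⟩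
  · rcases eq_or_ne i j with rfl | hij
    · rw [transfer_apply_left hjk]; linarith
    rcases eq_or_ne i k with rfl | hik
    · rw [transfer_apply_right hjk]; linarith [hp i]
    rw [transfer_apply_of_ne hij hik]; exact hp i
  · rcases eq_or_ne i j with rfl | hij
    · rw [transfer_apply_left hjk] at hi; exact hpε i (by linarith)
    rcases eq_or_ne i k with rfl | hik
    · exact hεk
    rw [transfer_apply_of_ne hij hik] at hi; exact hpε i hi

end Transfer

section Minimizer

variable {η Q : ℝ} {v p ε : Fin N → ℝ}

lemma IsMinimizer.sub_mul_sub_nonneg (hmin : IsMinimizer η Q v p ε) (j k : Fin N) :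
    0 ≤ (ε j - ε k) * (v k - v j) := by
  rcases eq_or_ne j k with rfl | hjk
  · simp
  have h := sub_nonneg.2 (hmin.2 _ _ (hmin.1.comp_perm (Equiv.swap j k)))
  rw [objG_comp_perm, objG_sub_objG, Fintype.sum_eq_add j k hjk] at h
  · simp only [Function.comp_apply, Equiv.symm_swap, Equiv.swap_apply_left,
      Equiv.swap_apply_right] at h
    linarith
  · rintro i ⟨hij, hik⟩
    simp [Equiv.swap_apply_of_ne_of_ne hij hik]

lemma IsMinimizer.dpError_le (hη : 0 < η) (hQ : 0 < Q) (hmin : IsMinimizer η Q v p ε)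
    {q : Fin N → ℝ} (hq : Feasible q ε) (hL : ∑ i, |q i - 1 / (N : ℝ)| = ∑ i, |p i - 1 / (N : ℝ)|) :
    dpError p ε ≤ dpError q ε := by
  have h := hmin.2 q ε hq
  simp only [objG, hL] at h
  set L := ∑ i, |p i - 1 / (N : ℝ)|
  have hsqrt : √(L ^ 2 + Q * dpError p ε) ≤ √(L ^ 2 + Q * dpError q ε) :=
    le_of_mul_le_mul_left (by linarith) hη
  rw [Real.sqrt_le_sqrt_iff (by have := dpError_nonneg q ε; positivity)] at hsqrt
  exact le_of_mul_le_mul_left (by linarith) hQ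

lemma IsMinimizer.div_sq_le_div_sq (hη : 0 < η) (hQ : 0 < Q) (hmin : IsMinimizer η Q v p ε)
    {j k : Fin N} (hpj : 0 < p j) (hj : p j ≤ 1 / (N : ℝ)) (hk : p k < 1 / (N : ℝ))
    (hεk : 0 < ε k) : p j / ε j ^ 2 ≤ p k / ε k ^ 2 := by
  rcases eq_or_ne j k with rfl | hjk
  · rfl
  have hfirst : ∀ δ ∈ Set.Ioc 0 (min (p j) (1 / (N : ℝ) - p k)),
      0 ≤ 2 * (p k / ε k ^ 2 - p j / ε j ^ 2) + δ * (1 / ε j ^ 2 + 1 / ε k ^ 2) := by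
    rintro δ ⟨hδ, hδr⟩
    have hq := hmin.1.transfer hjk hδ.le (hδr.trans (min_le_left _ _)) hεk
    have hdp := hmin.dpError_le hη hQ hq
      (sum_abs_transfer_sub_eq hjk hδ.le hj (by linarith [hδr.trans (min_le_right _ _)]))
    rw [← sub_nonneg, dpError_transfer_sub hjk] at hdp
    exact nonneg_of_mul_nonneg_right hdp hδ
  have := nonneg_of_forall_mem_Ioc_nonneg_add_mul (lt_min hpj (sub_pos.2 hk)) hfirst
  linarith

lemma IsMinimizer.eps_lt_eps (hη : 0 < η) (hQ : 0 < Q) (hmin : IsMinimizer η Q v p ε)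
    {j k : Fin N} (hpk : 0 < p k) (hkj : p k < p j) (hj : p j ≤ 1 / (N : ℝ)) : ε k < ε j := by
  have hpj := hpk.trans hkj
  have hεj := hmin.1.2.2.2 j hpj
  have hεk := hmin.1.2.2.2 k hpk
  have h := hmin.div_sq_le_div_sq hη hQ hpj hj (hkj.trans_le hj) hεk
  rw [div_le_div_iff₀ (by positivity) (by positivity)] at h
  have hsq : ε k ^ 2 < ε j ^ 2 := lt_of_mul_lt_mul_left (by nlinarith [pow_pos hεj 2]) hpj.le
  exact lt_of_pow_lt_pow_left₀ 2 hεj.le hsq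

end Minimizer

theorem unbiased_has_smaller_cost_than_under_selected_general
    {N : ℕ} (v : Fin N → ℝ)
    (η Q : ℝ) (hη : 0 < η) (hQ : 0 < Q)
    (p ε : Fin N → ℝ) (hmin : IsMinimizer η Q v p ε)
    (j k : Fin N) (hj : p j = 1 / (N : ℝ))
    (hk : 0 < p k) (hk' : p k < 1 / (N : ℝ)) :
    v j ≤ v k := by
  have hεkj : ε k < ε j := hmin.eps_lt_eps hη hQ hk (hj ▸ hk') hj.le
  exact sub_nonneg.1 (nonneg_of_mul_nonneg_right (hmin.sub_mul_sub_nonneg j k) (sub_pos.2 hεkj))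

/-- At a minimizer of Problem 3, if client `j` is unbiasedly
selected (`pⱼ = 1/N`) and client `k` is under-selected (`0 < pₖ < 1/N`), then
`vⱼ ≤ vₖ`. -/
theorem unbiased_has_smaller_cost_than_under_selected
    {N : ℕ} (hN : 2 ≤ N) (v : Fin N → ℝ)
    (hv_pos : ∀ k, 0 < v k) (hv_inj : Function.Injective v)
    (η Q : ℝ) (hη : 0 < η) (hQ : 0 < Q)
    (p ε : Fin N → ℝ) (hmin : IsMinimizer η Q v p ε)
    (j k : Fin N) (hj : p j = 1 / (N : ℝ))
    (hk : 0 < p k) (hk' : p k < 1 / (N : ℝ)) :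
    v j ≤ v k :=
  unbiased_has_smaller_cost_than_under_selected_general v η Q hη hQ p ε hmin j k hj hk hk'
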